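/- arXiv:2601.18005 — 4 statements merged into one kernel-verified Lean document; each statement's English description precedes it below -/
import Mathlib

section
/- There exist 13 points p_1, …, p_13 in the unit square [0,1]^2 such that for every triple 1 ≤ i < j < k ≤ 13, the area of the triangle with vertices p_i, p_j, p_k, namely (1/2)·|det(p_j − p_i, p_k − p_i)|, is at least 0.0259285138. -/
/-! All coordinates are multiples of `10⁻⁶`. After scaling by `10⁶` every doubled triangle area
is an integer determinant, and the bound `2 · 0.0259285138 · 10¹² = 51857027600` over all 286
triples becomes a finite computation in `ℤ`. -/

/-- Twice the signed area of the triangle `p q r`. -/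
def cross {R : Type*} [CommRing R] (p q r : R × R) : R :=
  (q.1 - p.1) * (r.2 - p.2) - (q.2 - p.2) * (r.1 - p.1)

section Cross

variable {R S : Type*} [CommRing R] [CommRing S]

theorem map_cross (f : R →+* S) (p q r : R × R) :
    cross (Prod.map f f p) (Prod.map f f q) (Prod.map f f r) = f (cross p q r) := by
  simp only [cross, Prod.map_fst, Prod.map_snd, map_sub, map_mul]

theorem cross_smul (c : R) (p q r : R × R) :
    cross (c • p) (c • q) (c • r) = c ^ 2 * cross p q r := by
  simp only [cross, Prod.smul_fst, Prod.smul_snd, smul_eq_mul]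
  ring

end Cross

theorem exists_unitSquare_of_intGrid {ι : Type*} [LT ι] (g : ι → ℤ × ℤ) {N : ℕ}
    (hN : 0 < N) {m : ℤ} (hg : ∀ i, 0 ≤ (g i).1 ∧ (g i).1 ≤ N ∧ 0 ≤ (g i).2 ∧ (g i).2 ≤ N)
    (hm : ∀ i j k, i < j → j < k → m ≤ |cross (g i) (g j) (g k)|) :
    ∃ p : ι → ℝ × ℝ, (∀ i, (p i).1 ∈ Set.Icc (0 : ℝ) 1 ∧ (p i).2 ∈ Set.Icc (0 : ℝ) 1) ∧
      ∀ i j k, i < j → j < k → (m : ℝ) / (2 * N ^ 2) ≤ 1 / 2 * |cross (p i) (p j) (p k)| := by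
  have hN' : (0 : ℝ) < N := by exact_mod_cast hN
  set f := Int.castRingHom ℝ
  refine ⟨fun i => (N : ℝ)⁻¹ • Prod.map f f (g i), fun i => ?_, fun i j k hij hjk => ?_⟩
  · obtain ⟨h0x, hxN, h0y, hyN⟩ := hg i
    have hcoord : ∀ z : ℤ, 0 ≤ z → z ≤ N → (N : ℝ)⁻¹ * f z ∈ Set.Icc (0 : ℝ) 1 := by
      intro z h0 hz
      have hz' : (z : ℝ) ≤ N := by exact_mod_cast hz
      have h0' : (0 : ℝ) ≤ z := by exact_mod_cast h0
      rw [eq_intCast]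
      exact ⟨by positivity, by rwa [inv_mul_le_iff₀ hN', mul_one]⟩
    exact ⟨hcoord _ h0x hxN, hcoord _ h0y hyN⟩
  · have hm' : (m : ℝ) ≤ |f (cross (g i) (g j) (g k))| := by
      rw [eq_intCast, ← Int.cast_abs]
      exact_mod_cast hm i j k hij hjk
    rw [cross_smul, map_cross, abs_mul, abs_of_nonneg (by positivity), div_le_iff₀ (by positivity)]
    calc (m : ℝ) ≤ |f (cross (g i) (g j) (g k))| := hm'
      _ = 1 / 2 * ((N : ℝ)⁻¹ ^ 2 * |f (cross (g i) (g j) (g k))|) * (2 * N ^ 2) := by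
        field_simp

def heilbronn13Grid : Fin 13 → ℤ × ℤ :=
  ![(468926, 834749), (81320, 353808), (1000000, 472730), (870349, 891716), (81327, 1000000),
    (328593, 328632), (796021, 507189), (711381, 1000000), (0, 899133), (578912, 90754),
    (0, 90702), (341306, 0), (1000000, 0)]

theorem heilbronn13Grid_mem : ∀ i, 0 ≤ (heilbronn13Grid i).1 ∧ (heilbronn13Grid i).1 ≤ 1000000 ∧
    0 ≤ (heilbronn13Grid i).2 ∧ (heilbronn13Grid i).2 ≤ 1000000 := by
  decide

theorem heilbronn13Grid_cross : ∀ i j k, i < j → j < k →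
    51857027600 ≤ |cross (heilbronn13Grid i) (heilbronn13Grid j) (heilbronn13Grid k)| := by
  decide

/-- Heilbronn configuration of 13 points with minimum triangle area at least 0.0259285138. -/
theorem heilbronn_13 : ∃ p : Fin 13 → ℝ × ℝ,
    (∀ i, (p i).1 ∈ Set.Icc (0:ℝ) 1 ∧ (p i).2 ∈ Set.Icc (0:ℝ) 1) ∧
    ∀ i j k : Fin 13, i < j → j < k →
      (0.0259285138 : ℝ) ≤ (1/2) * |((p j).1 - (p i).1) * ((p k).2 - (p i).2)
        - ((p j).2 - (p i).2) * ((p k).1 - (p i).1)| := by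
  obtain ⟨p, hp, harea⟩ := exists_unitSquare_of_intGrid heilbronn13Grid (N := 1000000)
    (by norm_num) heilbronn13Grid_mem heilbronn13Grid_cross
  exact ⟨p, hp, fun i j k hij hjk => le_of_eq_of_le (by norm_num) (harea i j k hij hjk)⟩
end

section
/- There exist 30 centers p_1, …, p_30 ∈ [0,1]^2 with p_i = (x_i, y_i) and radii r_1, …, r_30 ≥ 0 such that r_i ≤ min{x_i, 1 − x_i, y_i, 1 − y_i} for every i, r_i + r_j ≤ ‖p_i − p_j‖ for all i < j, and Σ_{i=1}^{30} r_i ≥ 2.842435. -/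
def XQ : Fin 30 → ℤ := ![30841031, 11025177, 39391756, 87724908, 65768173, 49120405, 23475766, 42714536, 60873730, 10981058, 27816705, 46586824, 9825415, 89059803, 57653305, 72360880, 53882377, 76752142, 68280899, 69332948, 51127937, 89080172, 12050084, 35008550, 93200071, 76223278, 23913022, 6813639, 90203136, 31940036]
def YQ : Fin 30 → ℤ := ![8979706, 88974841, 24603584, 46461731, 43611389, 9301757, 72208853, 73972043, 75534787, 10980639, 38822345, 41400272, 31755140, 10939963, 26041900, 61600916, 58772071, 27464088, 9866572, 91072262, 90719825, 89080317, 53517071, 56528283, 28189798, 77085411, 23071881, 71639584, 68394189, 90081616]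
def RQ : Fin 30 → ℤ := ![8979706, 11025159, 8830484, 12275067, 9864964, 9301757, 9857263, 9462134, 8763282, 10980639, 9503089, 9442384, 9825352, 10939963, 9487619, 9294547, 9398977, 9663757, 9866572, 8927718, 9280157, 10919683, 12049667, 9607715, 6799548, 6663760, 6723353, 6813639, 9796864, 9918354]

noncomputable def P : Fin 30 → EuclideanSpace ℝ (Fin 2) :=
  fun i => WithLp.toLp 2 ![(XQ i : ℝ) / 100000000, (YQ i : ℝ) / 100000000]

lemma P_apply0 (i : Fin 30) : P i 0 = (XQ i : ℝ) / 100000000 := rfl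
lemma P_apply1 (i : Fin 30) : P i 1 = (YQ i : ℝ) / 100000000 := rfl

lemma norm_ge (i j : Fin 30) (s : ℝ) (hs : 0 ≤ s)
    (h : s^2 ≤ (P i 0 - P j 0)^2 + (P i 1 - P j 1)^2) : s ≤ ‖P i - P j‖ := by
  have hn : ‖P i - P j‖ = Real.sqrt ((P i 0 - P j 0)^2 + (P i 1 - P j 1)^2) := by
    rw [EuclideanSpace.norm_eq]
    congr 1
    rw [Fin.sum_univ_two]
    simp only [PiLp.sub_apply, Real.norm_eq_abs, sq_abs]
  rw [hn]
  calc s = Real.sqrt (s^2) := (Real.sqrt_sq hs).symm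
    _ ≤ _ := Real.sqrt_le_sqrt h

/-- A valid packing of 30 circles in the unit square with sum of radii at least 2.842435. -/
theorem circle_packing_sum_radii_30 : ∃ (p : Fin 30 → EuclideanSpace ℝ (Fin 2)) (r : Fin 30 → ℝ),
    (∀ i, p i 0 ∈ Set.Icc (0:ℝ) 1 ∧ p i 1 ∈ Set.Icc (0:ℝ) 1) ∧
    (∀ i, 0 ≤ r i) ∧
    (∀ i, r i ≤ min (min (p i 0) (1 - p i 0)) (min (p i 1) (1 - p i 1))) ∧
    (∀ i j, i < j → r i + r j ≤ ‖p i - p j‖) ∧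
    (2.842435 : ℝ) ≤ ∑ i, r i := by
  have hbox : ∀ i : Fin 30, 0 ≤ XQ i ∧ XQ i ≤ 100000000 ∧ 0 ≤ YQ i ∧ YQ i ≤ 100000000 := by decide
  have hr : ∀ i : Fin 30, 0 ≤ RQ i := by decide
  have hb : ∀ i : Fin 30, RQ i ≤ XQ i ∧ RQ i + XQ i ≤ 100000000 ∧ RQ i ≤ YQ i ∧
      RQ i + YQ i ≤ 100000000 := by decide
  have hpair : ∀ i j : Fin 30, i < j →
      (RQ i + RQ j)^2 ≤ (XQ i - XQ j)^2 + (YQ i - YQ j)^2 := by decide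
  have hsum : (284243500 : ℤ) ≤ ∑ i, RQ i := by decide
  refine ⟨P, fun i => (RQ i : ℝ) / 100000000, ?_, ?_, ?_, ?_, ?_⟩
  · intro i
    obtain ⟨h1, h2, h3, h4⟩ := hbox i
    have c1 : (0:ℝ) ≤ (XQ i : ℝ) := by exact_mod_cast h1
    have c2 : (XQ i : ℝ) ≤ 100000000 := by exact_mod_cast h2
    have c3 : (0:ℝ) ≤ (YQ i : ℝ) := by exact_mod_cast h3
    have c4 : (YQ i : ℝ) ≤ 100000000 := by exact_mod_cast h4
    rw [P_apply0, P_apply1]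
    exact ⟨⟨by positivity, by linarith [(by linarith : (XQ i : ℝ)/100000000 ≤ 1)]⟩,
      ⟨by positivity, by linarith [(by linarith : (YQ i : ℝ)/100000000 ≤ 1)]⟩⟩
  · intro i
    have : (0:ℝ) ≤ (RQ i : ℝ) := by exact_mod_cast hr i
    positivity
  · intro i
    obtain ⟨h1, h2, h3, h4⟩ := hb i
    have c1 : (RQ i : ℝ) ≤ (XQ i : ℝ) := by exact_mod_cast h1
    have c2 : (RQ i : ℝ) + (XQ i : ℝ) ≤ 100000000 := by exact_mod_cast h2
    have c3 : (RQ i : ℝ) ≤ (YQ i : ℝ) := by exact_mod_cast h3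
    have c4 : (RQ i : ℝ) + (YQ i : ℝ) ≤ 100000000 := by exact_mod_cast h4
    rw [P_apply0, P_apply1]
    refine le_min (le_min ?_ ?_) (le_min ?_ ?_) <;> linarith
  · intro i j hij
    have h := hpair i j hij
    have hR : (((RQ i + RQ j)^2 : ℤ) : ℝ) ≤ (((XQ i - XQ j)^2 + (YQ i - YQ j)^2 : ℤ) : ℝ) := by
      exact_mod_cast h
    push_cast at hR
    have hri : (0:ℝ) ≤ (RQ i : ℝ) := by exact_mod_cast hr i
    have hrj : (0:ℝ) ≤ (RQ j : ℝ) := by exact_mod_cast hr j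
    refine norm_ge i j _ (by positivity) ?_
    rw [P_apply0, P_apply1, P_apply0, P_apply1]
    rw [← add_div, div_sub_div_same, div_sub_div_same, div_pow, div_pow, div_pow,
      ← add_div, div_le_div_iff₀ (by norm_num) (by norm_num)]
    nlinarith [hR]
  · have key : ((∑ i, RQ i : ℤ) : ℝ) = ∑ i, (RQ i : ℝ) := by push_cast; rfl
    have h1 : (284243500 : ℝ) ≤ ∑ i, (RQ i : ℝ) := by rw [← key]; exact_mod_cast hsum
    rw [← Finset.sum_div]
    rw [show (2.842435 : ℝ) = 284243500 / 100000000 by norm_num]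
    apply div_le_div_of_nonneg_right h1 (by norm_num) |>.trans_eq rfl
end

section
/- There exist 32 centers p_1, …, p_32 ∈ [0,1]^2 with p_i = (x_i, y_i) and radii r_1, …, r_32 ≥ 0 such that r_i ≤ min{x_i, 1 − x_i, y_i, 1 − y_i} for every i, r_i + r_j ≤ ‖p_i − p_j‖ for all i < j, and Σ_{i=1}^{32} r_i ≥ 2.939349. -/
private def pkX : Fin 32 → ℤ := ![698888, 2437245, 5732954, 8965514, 9037096, 2489670, 877394, 4102972, 7359828, 7375356, 907819, 2495851, 4113494, 7403446, 3928108, 6760886, 2471882, 907103, 5765745, 5760020, 9055963, 892290, 4085071, 5748029, 7443963, 7587787, 2552400, 726019, 8868351, 4807513, 4092403, 9067552]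

private def pkY : Fin 32 → ℤ := ![698888, 1080961, 1061966, 1034486, 3030592, 3099084, 2265030, 2184040, 623071, 2159413, 4049983, 4958791, 4039592, 4019073, 7563499, 9018819, 6792427, 5864904, 7132334, 5008758, 4937440, 7664236, 5906563, 3080388, 5897206, 7537911, 8851385, 9273981, 8868351, 9027787, 633591, 6813889]

private def pkR : Fin 32 → ℤ := ![698888, 1080960, 1061965, 1034486, 962903, 937843, 877392, 916893, 623069, 913349, 907817, 921874, 938685, 946522, 735853, 981180, 911916, 907103, 1151686, 971895, 944036, 892288, 928500, 956511, 932047, 714947, 1148615, 726019, 1131648, 972213, 633591, 932448]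

private def pkD : ℤ := 10000000

private lemma pk_border : ∀ i : Fin 32, 0 ≤ pkR i ∧ pkR i ≤ pkX i ∧ pkR i ≤ pkD - pkX i ∧
    pkR i ≤ pkY i ∧ pkR i ≤ pkD - pkY i := by decide

private lemma pk_pairs : ∀ i j : Fin 32, i < j →
    (pkR i + pkR j)^2 ≤ (pkX i - pkX j)^2 + (pkY i - pkY j)^2 := by decide

private lemma pk_sumval : ∑ i : Fin 32, ((pkR i : ℝ)) = 29395142 := by
  simp [Fin.sum_univ_succ, pkR]
  norm_num

private lemma norm_pair_ge (x y : EuclideanSpace ℝ (Fin 2)) (s : ℝ) (hs : 0 ≤ s)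
    (h : s^2 ≤ (x 0 - y 0)^2 + (x 1 - y 1)^2) : s ≤ ‖x - y‖ := by
  have h2 : s^2 ≤ ∑ i : Fin 2, ‖(x - y) i‖^2 := by
    simpa [Fin.sum_univ_two, PiLp.sub_apply, sq_abs] using h
  calc s = Real.sqrt (s^2) := by rw [Real.sqrt_sq hs]
    _ ≤ Real.sqrt (∑ i : Fin 2, ‖(x - y) i‖^2) := Real.sqrt_le_sqrt h2
    _ = ‖x - y‖ := (EuclideanSpace.norm_eq _).symm

private lemma pkD_pos : (0:ℝ) < (pkD:ℝ) := by norm_num [pkD]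

/-- A valid packing of 32 circles in the unit square with sum of radii at least 2.939349. -/
theorem circle_packing_sum_radii_32 : ∃ (p : Fin 32 → EuclideanSpace ℝ (Fin 2)) (r : Fin 32 → ℝ),
    (∀ i, p i 0 ∈ Set.Icc (0:ℝ) 1 ∧ p i 1 ∈ Set.Icc (0:ℝ) 1) ∧
    (∀ i, 0 ≤ r i) ∧
    (∀ i, r i ≤ min (min (p i 0) (1 - p i 0)) (min (p i 1) (1 - p i 1))) ∧
    (∀ i j, i < j → r i + r j ≤ ‖p i - p j‖) ∧
    (2.939349 : ℝ) ≤ ∑ i, r i := by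
  have hD := pkD_pos
  refine ⟨fun i => WithLp.toLp 2 ![(pkX i : ℝ)/(pkD:ℝ), (pkY i : ℝ)/(pkD:ℝ)], fun i => (pkR i : ℝ)/(pkD:ℝ), ?_, ?_, ?_, ?_, ?_⟩
  · intro i
    obtain ⟨h0, h1, h2, h3, h4⟩ := pk_border i
    have hx0 : (0:ℝ) ≤ (pkX i : ℝ) := by exact_mod_cast le_trans h0 h1
    have hy0 : (0:ℝ) ≤ (pkY i : ℝ) := by exact_mod_cast le_trans h0 h3
    have hx1 : (pkX i : ℝ) ≤ (pkD : ℝ) := by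
      have : pkX i ≤ pkD := by linarith [le_trans h0 h2]
      exact_mod_cast this
    have hy1 : (pkY i : ℝ) ≤ (pkD : ℝ) := by
      have : pkY i ≤ pkD := by linarith [le_trans h0 h4]
      exact_mod_cast this
    simp only [PiLp.toLp_apply, Matrix.cons_val_zero, Matrix.cons_val_one, Matrix.head_cons, Set.mem_Icc]
    refine ⟨⟨by positivity, ?_⟩, by positivity, ?_⟩ <;>
      rw [div_le_one hD] <;> assumption
  · intro i
    have h0 := (pk_border i).1
    have : (0:ℝ) ≤ (pkR i : ℝ) := by exact_mod_cast h0
    positivity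
  · intro i
    obtain ⟨h0, h1, h2, h3, h4⟩ := pk_border i
    simp only [PiLp.toLp_apply, Matrix.cons_val_zero, Matrix.cons_val_one, Matrix.head_cons]
    have e1 : (1:ℝ) - (pkX i : ℝ)/(pkD:ℝ) = ((pkD - pkX i : ℤ) : ℝ)/(pkD:ℝ) := by
      push_cast; field_simp
    have e2 : (1:ℝ) - (pkY i : ℝ)/(pkD:ℝ) = ((pkD - pkY i : ℤ) : ℝ)/(pkD:ℝ) := by
      push_cast; field_simp
    rw [e1, e2]
    refine le_min (le_min ?_ ?_) (le_min ?_ ?_) <;>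
      refine div_le_div_of_nonneg_right ?_ hD.le <;> exact_mod_cast ‹_›
  · intro i j hij
    apply norm_pair_ge
    · have h0i := (pk_border i).1
      have h0j := (pk_border j).1
      have hi : (0:ℝ) ≤ (pkR i : ℝ) := by exact_mod_cast h0i
      have hj : (0:ℝ) ≤ (pkR j : ℝ) := by exact_mod_cast h0j
      positivity
    · have key := pk_pairs i j hij
      have keyR : ((pkR i : ℝ) + (pkR j : ℝ))^2 ≤
          ((pkX i : ℝ) - (pkX j : ℝ))^2 + ((pkY i : ℝ) - (pkY j : ℝ))^2 := by
        exact_mod_cast key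
      simp only [PiLp.toLp_apply, Matrix.cons_val_zero, Matrix.cons_val_one, Matrix.head_cons]
      rw [← add_div, div_sub_div_same, div_sub_div_same, div_pow, div_pow, div_pow,
        ← add_div]
      exact div_le_div_of_nonneg_right keyR (by positivity)
  · rw [← Finset.sum_div, pk_sumval, le_div_iff₀ hD]
    norm_num [pkD]
end

section
/- There exists a set P of 60 points in the unit square [0,1]^2 whose anchored star discrepancy satisfies D*(P) ≤ 0.02943972, i.e., for every (a,b) ∈ [0,1]^2, the quantity |(1/60)·#(P ∩ ([0,a) × [0,b))) − a·b| is at most 0.02943972. -/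
/-!
All points lie on the lattice `(ℤ / 1200)²`. Let `u < u'` be consecutive values among `0`, `1200`
and the first coordinates of the points, and `v < v'` likewise for the second coordinates. For
`u / 1200 < a ≤ u' / 1200` and `v / 1200 < b ≤ v' / 1200`, the half-open box `[0, a) × [0, b)`
contains exactly the points of the closed box `[0, u / 1200] × [0, v / 1200]`, while its area
lies between `u v / 1200²` and `u' v' / 1200²`. The supremum over `(a, b)` is thereby bounded by
finitely many integer inequalities, two per grid cell, which are checked by evaluation.
-/

open Finset

theorem List.exists_mem_zip_cons_lt_le {α β : Type*} [LinearOrder β] (f : α → β) {a : β} :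
    ∀ {x : α} {l : List α}, f x < a → (∃ z ∈ l, a ≤ f z) →
      ∃ p ∈ (x :: l).zip l, f p.1 < a ∧ a ≤ f p.2
  | _, [], _, ⟨_, hz, _⟩ => absurd hz List.not_mem_nil
  | x, y :: l, hx, ⟨z, hz, haz⟩ => by
    rcases le_or_gt a (f y) with hay | hya
    · exact ⟨(x, y), by simp, hx, hay⟩
    · have hzl : z ∈ l := by
        rcases List.mem_cons.1 hz with rfl | hzl
        · exact absurd haz (not_le.2 hya)
        · exact hzl
      obtain ⟨p, hp, h⟩ := exists_mem_zip_cons_lt_le f hya ⟨z, hzl, haz⟩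
      exact ⟨p, List.mem_cons_of_mem _ hp, h⟩

theorem abs_sub_mul_le_of_bracket {c a b u u' v v' ε : ℝ} (hu : 0 ≤ u) (hv : 0 ≤ v)
    (hua : u ≤ a) (hau : a ≤ u') (hvb : v ≤ b) (hbv : b ≤ v')
    (hlow : c - u * v ≤ ε) (hupp : u' * v' - c ≤ ε) : |c - a * b| ≤ ε := by
  have hb : 0 ≤ b := hv.trans hvb
  have h₁ : u * v ≤ a * b := mul_le_mul hua hvb hv (hu.trans hua)
  have h₂ : a * b ≤ u' * v' := mul_le_mul hau hbv hb ((hu.trans hua).trans hau)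
  rw [abs_le]
  constructor <;> linarith

namespace StarDiscrepancy

noncomputable def scaledPoints (n : ℕ) (pts : List (ℕ × ℕ)) : Finset (ℝ × ℝ) :=
  pts.toFinset.image fun q => ((q.1 : ℝ) / n, (q.2 : ℝ) / n)

def boxCount (pts : List (ℕ × ℕ)) (u v : ℕ) : ℕ :=
  (pts.filter fun q => q.1 ≤ u ∧ q.2 ≤ v).length

variable {n : ℕ} {pts : List (ℕ × ℕ)}

theorem scale_injective (hn : n ≠ 0) :
    Function.Injective fun q : ℕ × ℕ => ((q.1 : ℝ) / n, (q.2 : ℝ) / n) := by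
  intro q q' h
  have hn' : (n : ℝ) ≠ 0 := Nat.cast_ne_zero.2 hn
  simp only [Prod.mk.injEq, div_left_inj' hn', Nat.cast_inj] at h
  exact Prod.ext h.1 h.2

theorem card_scaledPoints (hn : n ≠ 0) (hpts : pts.Nodup) :
    (scaledPoints n pts).card = pts.length := by
  rw [scaledPoints, card_image_of_injective _ (scale_injective hn),
    List.toFinset_card_of_nodup hpts]

theorem mem_Icc_of_mem_scaledPoints (hpts : ∀ q ∈ pts, q.1 ≤ n ∧ q.2 ≤ n) :
    ∀ p ∈ scaledPoints n pts, p.1 ∈ Set.Icc (0 : ℝ) 1 ∧ p.2 ∈ Set.Icc (0 : ℝ) 1 := by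
  simp only [scaledPoints, mem_image, List.mem_toFinset]
  rintro _ ⟨q, hq, rfl⟩
  have hle (i : ℕ) (hi : i ≤ n) : (i : ℝ) / n ∈ Set.Icc (0 : ℝ) 1 :=
    ⟨by positivity, div_le_one_of_le₀ (Nat.cast_le.2 hi) n.cast_nonneg⟩
  exact ⟨hle _ (hpts q hq).1, hle _ (hpts q hq).2⟩

theorem cast_div_lt_iff_le {i u u' : ℕ} {a : ℝ} (hua : (u : ℝ) / n < a)
    (hau : a ≤ (u' : ℝ) / n) (hi : i ≤ u ∨ u' ≤ i) : (i : ℝ) / n < a ↔ i ≤ u := by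
  refine ⟨fun hia => hi.resolve_right fun hui => ?_, fun hiu => ?_⟩
  · have : (u' : ℝ) / n ≤ i / n := by gcongr
    linarith
  · have : (i : ℝ) / n ≤ u / n := by gcongr
    linarith

theorem card_filter_scaledPoints (hn : n ≠ 0) (hpts : pts.Nodup) {a b : ℝ} {u u' v v' : ℕ}
    (hua : (u : ℝ) / n < a) (hau : a ≤ (u' : ℝ) / n)
    (hvb : (v : ℝ) / n < b) (hbv : b ≤ (v' : ℝ) / n)
    (hgx : ∀ q ∈ pts, q.1 ≤ u ∨ u' ≤ q.1) (hgy : ∀ q ∈ pts, q.2 ≤ v ∨ v' ≤ q.2) :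
    ((scaledPoints n pts).filter fun p => 0 ≤ p.1 ∧ p.1 < a ∧ 0 ≤ p.2 ∧ p.2 < b).card =
      boxCount pts u v := by
  classical
  rw [scaledPoints, filter_image, card_image_of_injective _ (scale_injective hn)]
  have hbox : ∀ q ∈ pts.toFinset, (0 ≤ (q.1 : ℝ) / n ∧ (q.1 : ℝ) / n < a ∧
      0 ≤ (q.2 : ℝ) / n ∧ (q.2 : ℝ) / n < b) ↔ (q.1 ≤ u ∧ q.2 ≤ v) := by
    intro q hq
    rw [List.mem_toFinset] at hq
    rw [cast_div_lt_iff_le hua hau (hgx q hq), cast_div_lt_iff_le hvb hbv (hgy q hq)]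
    have : ∀ i : ℕ, 0 ≤ (i : ℝ) / n := fun _ => by positivity
    simp only [this, true_and]
  rw [filter_congr hbox, boxCount, ← List.toFinset_card_of_nodup (hpts.filter _),
    List.toFinset_filter]
  simp only [decide_eq_true_eq]

theorem abs_card_filter_div_sub_mul_le (hn : n ≠ 0) (hpts : pts.Nodup)
    {xs ys : List ℕ} (hxs : n ∈ xs) (hys : n ∈ ys)
    (hgx : ∀ p ∈ (0 :: xs).zip xs, ∀ q ∈ pts, q.1 ≤ p.1 ∨ p.2 ≤ q.1)
    (hgy : ∀ r ∈ (0 :: ys).zip ys, ∀ q ∈ pts, q.2 ≤ r.1 ∨ r.2 ≤ q.2)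
    {ε : ℝ} (hε : 0 ≤ ε)
    (hlow : ∀ p ∈ (0 :: xs).zip xs, ∀ r ∈ (0 :: ys).zip ys,
      (boxCount pts p.1 r.1 : ℝ) / pts.length - p.1 / n * (r.1 / n) ≤ ε)
    (hupp : ∀ p ∈ (0 :: xs).zip xs, ∀ r ∈ (0 :: ys).zip ys,
      (p.2 : ℝ) / n * (r.2 / n) - boxCount pts p.1 r.1 / pts.length ≤ ε)
    {a b : ℝ} (ha : a ∈ Set.Icc (0 : ℝ) 1) (hb : b ∈ Set.Icc (0 : ℝ) 1) :
    |(((scaledPoints n pts).filter fun p => 0 ≤ p.1 ∧ p.1 < a ∧ 0 ≤ p.2 ∧ p.2 < b).card : ℝ)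
      / pts.length - a * b| ≤ ε := by
  have hn' : (n : ℝ) / n = 1 := div_self (Nat.cast_ne_zero.2 hn)
  rcases ha.1.eq_or_lt with rfl | ha₀
  · rw [filter_false_of_mem fun p _ h => ?_]
    · simpa using hε
    · exact (h.1.trans_lt h.2.1).false
  rcases hb.1.eq_or_lt with rfl | hb₀
  · rw [filter_false_of_mem fun p _ h => ?_]
    · simpa using hε
    · exact (h.2.2.1.trans_lt h.2.2.2).false
  obtain ⟨p, hp, hpa, hap⟩ := List.exists_mem_zip_cons_lt_le (fun i : ℕ => (i : ℝ) / n) (x := 0)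
    (by simpa using ha₀) ⟨n, hxs, hn'.symm ▸ ha.2⟩
  obtain ⟨r, hr, hrb, hbr⟩ := List.exists_mem_zip_cons_lt_le (fun i : ℕ => (i : ℝ) / n) (x := 0)
    (by simpa using hb₀) ⟨n, hys, hn'.symm ▸ hb.2⟩
  rw [card_filter_scaledPoints hn hpts hpa hap hrb hbr (hgx p hp) (hgy r hr)]
  exact abs_sub_mul_le_of_bracket (by positivity) (by positivity) hpa.le hap hrb.le hbr
    (hlow p hp r hr) (hupp p hp r hr)

end StarDiscrepancy

namespace StarDiscrepancy60

open StarDiscrepancy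

/-- Coordinates in units of `1 / 1200`. -/
def points : List (ℕ × ℕ) :=
  [(185, 21), (241, 613), (42, 924), (64, 57), (47, 721), (326, 1116), (415, 452), (286, 873),
   (350, 205), (90, 383), (125, 995), (133, 277), (164, 770), (621, 1154), (296, 299), (486, 965),
   (274, 429), (593, 341), (152, 1079), (369, 493), (387, 805), (219, 152), (532, 534), (427, 1040),
   (452, 222), (511, 687), (547, 1179), (734, 184), (570, 821), (544, 42), (9, 550), (872, 1138),
   (708, 414), (811, 742), (654, 129), (624, 587), (679, 944), (830, 320), (682, 906), (762, 1065),
   (466, 635), (915, 707), (786, 103), (1018, 565), (1098, 792), (759, 663), (1119, 851),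
   (958, 374), (989, 155), (1026, 1089), (1166, 160), (862, 851), (1195, 1157), (885, 237),
   (1188, 881), (1136, 271), (930, 480), (970, 1003), (1052, 87), (1076, 504)]

/-- The first coordinates of `points` in increasing order, then `1200`. -/
def xGrid : List ℕ :=
  [9, 42, 47, 64, 90, 125, 133, 152, 164, 185, 219, 241, 274, 286, 296, 326, 350, 369, 387, 415,
   427, 452, 466, 486, 511, 532, 544, 547, 570, 593, 621, 624, 654, 679, 682, 708, 734, 759, 762,
   786, 811, 830, 862, 872, 885, 915, 930, 958, 970, 989, 1018, 1026, 1052, 1076, 1098, 1119, 1136,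
   1166, 1188, 1195, 1200]

/-- The second coordinates of `points` in increasing order, then `1200`. -/
def yGrid : List ℕ :=
  [21, 42, 57, 87, 103, 129, 152, 155, 160, 184, 205, 222, 237, 271, 277, 299, 320, 341, 374, 383,
   414, 429, 452, 480, 493, 504, 534, 550, 565, 587, 613, 635, 663, 687, 707, 721, 742, 770, 792,
   805, 821, 851, 873, 881, 906, 924, 944, 965, 995, 1003, 1040, 1065, 1079, 1089, 1116, 1138, 1154,
   1157, 1179, 1200]

theorem points_nodup : points.Nodup := by decide

theorem points_length : points.length = 60 := by decide

theorem points_le : ∀ q ∈ points, q.1 ≤ 1200 ∧ q.2 ≤ 1200 := by decide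

theorem xGrid_gap : ∀ p ∈ (0 :: xGrid).zip xGrid, ∀ q ∈ points, q.1 ≤ p.1 ∨ p.2 ≤ q.1 := by
  decide +kernel

theorem yGrid_gap : ∀ r ∈ (0 :: yGrid).zip yGrid, ∀ q ∈ points, q.2 ≤ r.1 ∨ r.2 ≤ q.2 := by
  decide +kernel

/-- The bounds on the grid boxes, cleared of the denominators `60`, `1200 ^ 2` and `10 ^ 8`. -/
theorem boxCount_bounds_nat : ∀ p ∈ (0 :: xGrid).zip xGrid, ∀ r ∈ (0 :: yGrid).zip yGrid,
    boxCount points p.1 r.1 * 1200 ^ 2 * 10 ^ 8 ≤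
        p.1 * r.1 * 60 * 10 ^ 8 + 2943972 * 60 * 1200 ^ 2 ∧
      p.2 * r.2 * 60 * 10 ^ 8 ≤
        boxCount points p.1 r.1 * 1200 ^ 2 * 10 ^ 8 + 2943972 * 60 * 1200 ^ 2 := by
  decide +kernel

theorem boxCount_bounds : ∀ p ∈ (0 :: xGrid).zip xGrid, ∀ r ∈ (0 :: yGrid).zip yGrid,
    (boxCount points p.1 r.1 : ℝ) / points.length - p.1 / (1200 : ℕ) * (r.1 / (1200 : ℕ))
        ≤ 0.02943972 ∧
      (p.2 : ℝ) / (1200 : ℕ) * (r.2 / (1200 : ℕ)) - boxCount points p.1 r.1 / points.length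
        ≤ 0.02943972 := by
  intro p hp r hr
  obtain ⟨hlow, hupp⟩ := boxCount_bounds_nat p hp r hr
  replace hlow := (Nat.cast_le (α := ℝ)).2 hlow
  replace hupp := (Nat.cast_le (α := ℝ)).2 hupp
  push_cast at hlow hupp ⊢
  rw [points_length, Nat.cast_ofNat]
  constructor <;> linarith

end StarDiscrepancy60

open StarDiscrepancy StarDiscrepancy60 in
/-- A set of 60 points in the unit square with anchored star discrepancy at most 0.02943972. -/
theorem star_discrepancy_60 : ∃ P : Finset (ℝ × ℝ),
    P.card = 60 ∧
    (∀ p ∈ P, p.1 ∈ Set.Icc (0:ℝ) 1 ∧ p.2 ∈ Set.Icc (0:ℝ) 1) ∧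
    ∀ a b : ℝ, a ∈ Set.Icc (0:ℝ) 1 → b ∈ Set.Icc (0:ℝ) 1 →
      |(((P.filter (fun p => 0 ≤ p.1 ∧ p.1 < a ∧ 0 ≤ p.2 ∧ p.2 < b)).card : ℝ)) / 60
        - a * b| ≤ 0.02943972 := by
  refine ⟨scaledPoints 1200 points, ?_, mem_Icc_of_mem_scaledPoints points_le, fun a b ha hb => ?_⟩
  · rw [card_scaledPoints (by norm_num) points_nodup, points_length]
  · have h := abs_card_filter_div_sub_mul_le (by norm_num) points_nodup (by decide) (by decide)
      xGrid_gap yGrid_gap (by norm_num) (fun p hp r hr => (boxCount_bounds p hp r hr).1)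
      (fun p hp r hr => (boxCount_bounds p hp r hr).2) ha hb
    rwa [points_length, Nat.cast_ofNat] at h
end
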